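/- arXiv:1601.05694 — 5 statements merged into one kernel-verified Lean document; each statement's English description precedes it below -/
import Mathlib

section
/- Let G be a finite group (|G| ≥ 2) and A a finite set (|A| ≥ 2). For x, y ∈ A^G, there exists an invertible cellular automaton τ with (xG)τ = yG if and only if the stabilisers G_x and G_y are conjugate in G. -/
/-- The right action of `G` on configurations `A^G`: `(x · g) h = x (h g⁻¹)`. -/
def confMul {G A : Type*} [Group G] (x : G → A) (g : G) : G → A := fun h => x (h * g⁻¹)

/-- The `G`-orbit of a configuration `x ∈ A^G`. -/
def orbitOf {G A : Type*} [Group G] (x : G → A) : Set (G → A) := {y | ∃ g : G, y = confMul x g}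

/-- `τ` is `G`-equivariant, i.e. a cellular automaton. -/
def equivariant {G A : Type*} [Group G] (τ : (G → A) → (G → A)) : Prop :=
  ∀ x g, τ (confMul x g) = confMul (τ x) g

lemma confMul_confMul {G A : Type*} [Group G] (x : G → A) (a b : G) :
    confMul (confMul x a) b = confMul x (a * b) := by
  funext k; simp [confMul, mul_assoc]

lemma confMul_one {G A : Type*} [Group G] (x : G → A) : confMul x 1 = x := by
  funext k; simp [confMul]

lemma orbit_eq_of_mem {G A : Type*} [Group G] {x z : G → A} (hz : z ∈ orbitOf x) :
    orbitOf z = orbitOf x := by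
  obtain ⟨a, rfl⟩ := hz
  ext w
  constructor
  · rintro ⟨b, rfl⟩
    exact ⟨a * b, (confMul_confMul x a b)⟩
  · rintro ⟨c, rfl⟩
    exact ⟨a⁻¹ * c, by rw [confMul_confMul, mul_inv_cancel_left]⟩

lemma hg_symm {G A : Type*} [Group G] {x y : G → A} {g : G}
    (hg : ∀ h : G, confMul x h = x ↔ confMul y (g⁻¹ * h * g) = y) :
    ∀ h : G, confMul y h = y ↔ confMul x (g⁻¹⁻¹ * h * g⁻¹) = x := by
  intro h
  have := (hg (g * h * g⁻¹)).symm
  rwa [show g⁻¹ * (g * h * g⁻¹) * g = h by group,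
    show g * h * g⁻¹ = g⁻¹⁻¹ * h * g⁻¹ by group] at this

lemma phiWD {G A : Type*} [Group G] {x y : G → A} {g : G}
    (hg : ∀ h : G, confMul x h = x ↔ confMul y (g⁻¹ * h * g) = y)
    {h h' : G} (e : confMul x h = confMul x h') :
    confMul y (g⁻¹ * h) = confMul y (g⁻¹ * h') := by
  have e1 : confMul x (h' * h⁻¹) = x := by
    have := congrArg (fun z => confMul z h⁻¹) e.symm
    simpa [confMul_confMul, confMul_one] using this
  have e2 := (hg _).1 e1
  have e3 := congrArg (fun z => confMul z (g⁻¹ * h)) e2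
  simp only [confMul_confMul] at e3
  rw [← e3]
  group

open Classical in
/-- The swap map exchanging the orbit of `x` with the orbit of `y`. -/
noncomputable def swapMap {G A : Type*} [Group G] (x y : G → A) (g : G) :
    (G → A) → (G → A) := fun z =>
  if hz : z ∈ orbitOf x then confMul y (g⁻¹ * hz.choose)
  else if hz' : z ∈ orbitOf y then confMul x (g * hz'.choose)
  else z

lemma swap_on_x {G A : Type*} [Group G] {x y : G → A} {g : G}
    (hg : ∀ h : G, confMul x h = x ↔ confMul y (g⁻¹ * h * g) = y) (h : G) :
    swapMap x y g (confMul x h) = confMul y (g⁻¹ * h) := by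
  have m : confMul x h ∈ orbitOf x := ⟨h, rfl⟩
  rw [swapMap, dif_pos m]
  exact phiWD hg m.choose_spec.symm

lemma swap_on_y {G A : Type*} [Group G] {x y : G → A} {g : G}
    (hg : ∀ h : G, confMul x h = x ↔ confMul y (g⁻¹ * h * g) = y) (k : G)
    (hk : confMul y k ∉ orbitOf x) :
    swapMap x y g (confMul y k) = confMul x (g * k) := by
  have m2 : confMul y k ∈ orbitOf y := ⟨k, rfl⟩
  rw [swapMap, dif_neg hk, dif_pos m2]
  have := phiWD (hg_symm hg) m2.choose_spec.symm
  rwa [inv_inv] at this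

lemma swap_off {G A : Type*} [Group G] {x y : G → A} (g : G) {z : G → A}
    (hzx : z ∉ orbitOf x) (hzy : z ∉ orbitOf y) :
    swapMap x y g z = z := by
  rw [swapMap, dif_neg hzx, dif_neg hzy]

lemma swap_leftInverse {G A : Type*} [Group G] {x y : G → A} {g : G}
    (hg : ∀ h : G, confMul x h = x ↔ confMul y (g⁻¹ * h * g) = y) :
    Function.LeftInverse (swapMap y x g⁻¹) (swapMap x y g) := by
  intro z
  by_cases hzx : z ∈ orbitOf x
  · obtain ⟨h, rfl⟩ := hzx
    rw [swap_on_x hg, swap_on_x (hg_symm hg), show g⁻¹⁻¹ * (g⁻¹ * h) = h by group]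
  · by_cases hzy : z ∈ orbitOf y
    · obtain ⟨c, rfl⟩ := hzy
      rw [swap_on_y hg c hzx]
      have hnot : confMul x (g * c) ∉ orbitOf y := by
        intro m
        apply hzx
        have e1 : orbitOf (confMul x (g * c)) = orbitOf y := orbit_eq_of_mem m
        have e2 : orbitOf (confMul x (g * c)) = orbitOf x :=
          orbit_eq_of_mem ⟨g * c, rfl⟩
        rw [← e2, e1]
        exact ⟨c, rfl⟩
      rw [swap_on_y (hg_symm hg) (g * c) hnot, show g⁻¹ * (g * c) = c by group]
    · rw [swap_off g hzx hzy, swap_off g⁻¹ hzy hzx]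

/-- For `x, y ∈ A^G`, there is an invertible cellular automaton mapping the orbit `xG`
onto the orbit `yG` if and only if the stabilisers `G_x` and `G_y` are conjugate in `G`. -/
theorem stmt6 {G A : Type*} [Group G] [Fintype G] [Fintype A]
    (hG : 2 ≤ Fintype.card G) (hA : 2 ≤ Fintype.card A) (x y : G → A) :
    (∃ τ : (G → A) → (G → A), equivariant τ ∧ Function.Bijective τ ∧
        τ '' orbitOf x = orbitOf y) ↔
      ∃ g : G, ∀ h : G, confMul x h = x ↔ confMul y (g⁻¹ * h * g) = y := by
  constructor
  · rintro ⟨τ, heq, hbij, himg⟩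
    have hx : x ∈ orbitOf x := ⟨1, (confMul_one x).symm⟩
    have hmem : τ x ∈ orbitOf y := himg ▸ Set.mem_image_of_mem τ hx
    obtain ⟨g0, hg0⟩ := hmem
    refine ⟨g0⁻¹, fun h => ?_⟩
    simp only [inv_inv]
    constructor
    · intro hh
      have e : τ (confMul x h) = τ x := by rw [hh]
      rw [heq, hg0, confMul_confMul] at e
      have e2 := congrArg (fun z => confMul z g0⁻¹) e
      simp only [confMul_confMul] at e2
      rw [show g0 * h * g0⁻¹ = g0 * h * g0⁻¹ from rfl] at e2
      simpa [confMul_one] using e2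
    · intro hh
      have e : confMul y (g0 * h) = confMul y g0 := by
        have := congrArg (fun z => confMul z g0) hh
        simp only [confMul_confMul] at this
        rwa [show g0 * h * g0⁻¹ * g0 = g0 * h by group] at this
      have h2 : τ (confMul x h) = τ x := by
        rw [heq, hg0, confMul_confMul, e]
      exact hbij.1 h2
  · rintro ⟨g, hg⟩
    refine ⟨swapMap x y g, ?_, ?_, ?_⟩
    · intro z k
      by_cases hzx : z ∈ orbitOf x
      · obtain ⟨h, rfl⟩ := hzx
        rw [confMul_confMul, swap_on_x hg, swap_on_x hg, confMul_confMul, mul_assoc]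
      · by_cases hzy : z ∈ orbitOf y
        · obtain ⟨c, rfl⟩ := hzy
          have h1 : confMul y (c * k) ∉ orbitOf x := by
            intro m
            apply hzx
            have e1 : orbitOf (confMul y (c * k)) = orbitOf x := orbit_eq_of_mem m
            rw [← e1]
            exact ⟨k⁻¹, by rw [confMul_confMul, mul_assoc, mul_inv_cancel, mul_one]⟩
          rw [confMul_confMul, swap_on_y hg _ h1, swap_on_y hg _ hzx,
            confMul_confMul, mul_assoc]
        · have h2 : confMul z k ∉ orbitOf x := by
            intro m
            apply hzx
            rw [← orbit_eq_of_mem m]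
            exact ⟨k⁻¹, by rw [confMul_confMul, mul_inv_cancel, confMul_one]⟩
          have h3 : confMul z k ∉ orbitOf y := by
            intro m
            apply hzy
            rw [← orbit_eq_of_mem m]
            exact ⟨k⁻¹, by rw [confMul_confMul, mul_inv_cancel, confMul_one]⟩
          rw [swap_off g h2 h3, swap_off g hzx hzy]
    · have hL := swap_leftInverse hg
      have hR := swap_leftInverse (hg_symm hg)
      rw [inv_inv] at hR
      exact ⟨hL.injective, hR.surjective⟩
    · ext w
      simp only [Set.mem_image]
      constructor
      · rintro ⟨z, ⟨h, rfl⟩, rfl⟩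
        rw [swap_on_x hg]
        exact ⟨g⁻¹ * h, rfl⟩
      · rintro ⟨k, rfl⟩
        exact ⟨confMul x (g * k), ⟨g * k, rfl⟩,
          by rw [swap_on_x hg, show g⁻¹ * (g * k) = k by group]⟩
end

section
/- Let G be a finite abelian group and A a finite set of size q ≥ 2. The group ICA(G;A) of invertible cellular automata is isomorphic to the direct product over all subgroups H_i ≤ G of the wreath products (G/H_i) ≀ Sym(α_i), where α_i is the number of G-orbits on A^G whose point stabiliser is H_i. -/
/-- The group `ICA(G;A)` of invertible cellular automata: bijective `G`-equivariant
transformations of `A^G`, as a subgroup of `Sym(A^G)`. -/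
def ICA (G A : Type*) [Group G] : Subgroup (Equiv.Perm (G → A)) where
  carrier := {e | ∀ x g, e (confMul x g) = confMul (e x) g}
  one_mem' := fun _ _ => rfl
  mul_mem' := by
    intro a b ha hb x g
    rw [Equiv.Perm.mul_apply, Equiv.Perm.mul_apply, hb x g, ha (b x) g]
  inv_mem' := by
    intro a ha x g
    apply a.injective
    rw [ha (a⁻¹ x) g]
    simp

/-- Permutations of coordinates as automorphisms of `Fin k → C`. -/
def permHom (C : Type*) [Group C] (k : ℕ) : Equiv.Perm (Fin k) →* MulAut (Fin k → C) where
  toFun σ :=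
    { toFun := fun v i => v (σ⁻¹ i)
      invFun := fun v i => v (σ i)
      left_inv := fun v => funext fun i => by simp
      right_inv := fun v => funext fun i => by simp
      map_mul' := fun v w => rfl }
  map_one' := by ext v i; simp
  map_mul' := by intro σ τ; ext v i; simp

/-- The wreath product `C ≀ Sym_k = C^k ⋊ Sym_k`. -/
abbrev wreath (C : Type*) [Group C] (k : ℕ) :=
  SemidirectProduct (Fin k → C) (Equiv.Perm (Fin k)) (permHom C k)

/-- `α_H`: the number of `G`-orbits on `A^G` consisting of configurations with
stabiliser exactly `H`. -/
noncomputable def alphaH (G A : Type*) [Group G] (H : Subgroup G) : ℕ :=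
  Nat.card {O : Set (G → A) | ∃ x : G → A,
    (∀ g : G, confMul x g = x ↔ g ∈ H) ∧ O = orbitOf x}

/-!
An invertible cellular automaton is a permutation of `A^G` commuting with the shift action of `G`.
Such a permutation preserves stabilisers, and since `G` is abelian the configurations with a given
stabiliser `H` form a shift-invariant set; so `ICA(G;A)` is the product over `H` of the groups of
equivariant permutations of these sets. On the configurations with stabiliser `H` the group
`G ⧸ H` acts freely, so they form `α_H` copies of the regular `G ⧸ H`-set. An equivariant
permutation of `α_H` copies of `G ⧸ H` permutes the copies and translates each one by an element
of the abelian group `G ⧸ H`, and this identifies it with an element of `(G ⧸ H) ≀ Sym(α_H)`.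
-/

open Equiv MulAction

section EquivariantPerms

variable (G X : Type*) [Group G] [MulAction G X]

def equivariantPerms : Subgroup (Perm X) :=
  Subgroup.centralizer (Set.range (toPermHom G X))

variable {G X}

theorem mem_equivariantPerms {e : Perm X} :
    e ∈ equivariantPerms G X ↔ ∀ (g : G) (x : X), e (g • x) = g • e x := by
  simp only [equivariantPerms, Subgroup.mem_centralizer_iff, Set.forall_mem_range, Perm.ext_iff,
    Perm.mul_apply, toPermHom_apply, toPerm_apply]
  exact forall_congr' fun g => forall_congr' fun x => eq_comm

theorem stabilizer_apply_of_mem_equivariantPerms {e : Perm X} (he : e ∈ equivariantPerms G X)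
    (x : X) : stabilizer G (e x) = stabilizer G x := by
  ext g
  rw [mem_stabilizer_iff, mem_stabilizer_iff, ← mem_equivariantPerms.1 he, e.apply_eq_iff_eq]

variable {Y : Type*} [MulAction G Y]

theorem map_permCongrHom_equivariantPerms (f : X ≃ Y)
    (hf : ∀ (g : G) (x : X), f (g • x) = g • f x) :
    (equivariantPerms G X).map f.permCongrHom.toMonoidHom = equivariantPerms G Y := by
  ext e
  simp only [Subgroup.mem_map_equiv, mem_equivariantPerms, permCongrHom_symm, permCongrHom_coe,
    permCongr_apply, symm_symm, hf, symm_apply_eq, apply_symm_apply]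
  exact forall_congr' fun g => f.forall_congr_right (q := fun y => e (g • y) = g • e y)

def equivariantPermsCongr (f : X ≃ Y) (hf : ∀ (g : G) (x : X), f (g • x) = g • f x) :
    equivariantPerms G X ≃* equivariantPerms G Y :=
  (f.permCongrHom.subgroupMap _).trans
    (MulEquiv.subgroupCongr (map_permCongrHom_equivariantPerms f hf))

end EquivariantPerms

section StabilizerFiber

variable {G X : Type*} [CommGroup G] [MulAction G X]

variable (X) in
def stabilizerFiber (H : Subgroup G) : SubMulAction G X where
  carrier := {x | stabilizer G x = H}
  smul_mem' g x hx := (stabilizer_smul_eq_right g x).trans hx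

theorem mem_stabilizerFiber {H : Subgroup G} {x : X} :
    x ∈ stabilizerFiber X H ↔ stabilizer G x = H :=
  Iff.rfl

theorem stabilizer_stabilizerFiber {H : Subgroup G} (y : stabilizerFiber X H) :
    stabilizer G y = H :=
  (SubMulAction.stabilizer_of_subMul y).trans y.2

def glueFibers : (∀ H : Subgroup G, Perm (stabilizerFiber X H)) →* Perm X :=
  (sigmaFiberEquiv (stabilizer G)).permCongrHom.toMonoidHom.comp (Perm.sigmaCongrRightHom _)

theorem glueFibers_apply (u : ∀ H : Subgroup G, Perm (stabilizerFiber X H)) {H : Subgroup G}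
    {x : X} (hx : x ∈ stabilizerFiber X H) : glueFibers u x = u H ⟨x, hx⟩ := by
  subst hx
  rfl

theorem glueFibers_mem (u : ∀ H : Subgroup G, equivariantPerms G (stabilizerFiber X H)) :
    glueFibers (fun H => u H) ∈ equivariantPerms G X := by
  refine mem_equivariantPerms.2 fun g x => ?_
  have hx : x ∈ stabilizerFiber X (stabilizer G x) := rfl
  rw [glueFibers_apply _ hx, glueFibers_apply _ ((stabilizerFiber X _).smul_mem g hx)]
  exact congrArg Subtype.val (mem_equivariantPerms.1 (u _).2 g ⟨x, hx⟩)

def equivariantPermsEquivPiStabilizerFiber :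
    equivariantPerms G X ≃* ∀ H : Subgroup G, equivariantPerms G (stabilizerFiber X H) where
  toFun e H := ⟨e.1.subtypePerm fun x => by
      rw [mem_stabilizerFiber, mem_stabilizerFiber, stabilizer_apply_of_mem_equivariantPerms e.2],
    mem_equivariantPerms.2 fun g x => Subtype.ext (mem_equivariantPerms.1 e.2 g x)⟩
  invFun u := ⟨glueFibers fun H => u H, glueFibers_mem u⟩
  left_inv e := by
    ext x
    exact glueFibers_apply _ rfl
  right_inv u := by
    ext H ⟨x, hx⟩
    exact glueFibers_apply (fun H => u H) hx
  map_mul' _ _ := rfl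

end StabilizerFiber

section Wreath

variable (Q : Type*) [Group Q] (k : ℕ)

def wreathToPerm : wreath Q k →* Perm (Σ _ : Fin k, Q) where
  toFun w :=
    { toFun := fun p => ⟨w.right p.1, w.left (w.right p.1) * p.2⟩
      invFun := fun p => ⟨w.right⁻¹ p.1, (w.left p.1)⁻¹ * p.2⟩
      left_inv := fun p => by simp
      right_inv := fun p => by simp }
  map_one' := by
    ext ⟨i, q⟩ <;> simp
  map_mul' v w := by
    ext ⟨i, q⟩ <;> simp [permHom, mul_assoc]

variable {Q k}

@[simp]
theorem wreathToPerm_apply (w : wreath Q k) (i : Fin k) (q : Q) :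
    wreathToPerm Q k w ⟨i, q⟩ = ⟨w.right i, w.left (w.right i) * q⟩ :=
  rfl

variable (Q k) in
theorem wreathToPerm_injective : Function.Injective (wreathToPerm Q k) := by
  refine (injective_iff_map_eq_one _).2 fun w hw => ?_
  have h i : (⟨w.right i, w.left (w.right i) * 1⟩ : Σ _ : Fin k, Q) = ⟨i, 1⟩ :=
    Perm.ext_iff.1 hw ⟨i, 1⟩
  simp only [Sigma.mk.injEq, mul_one, heq_eq_eq] at h
  have hright : w.right = 1 := Perm.ext fun i => (h i).1
  refine SemidirectProduct.ext (funext fun i => ?_) hright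
  simpa [hright] using (h i).2

end Wreath

theorem QuotientGroup.smul_eq_mk_mul {G : Type*} [Group G] (H : Subgroup G) [H.Normal] (g : G)
    (q : G ⧸ H) : g • q = (g : G ⧸ H) * q := by
  induction q using QuotientGroup.induction_on with
  | H a => rfl

section WreathQuotient

variable {G : Type*} [CommGroup G] (H : Subgroup G) (k : ℕ)

theorem range_wreathToPerm :
    (wreathToPerm (G ⧸ H) k).range = equivariantPerms G (Σ _ : Fin k, G ⧸ H) := by
  ext e
  constructor
  · rintro ⟨w, rfl⟩
    refine mem_equivariantPerms.2 fun g ⟨i, q⟩ => ?_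
    simp only [Sigma.smul_mk, wreathToPerm_apply, QuotientGroup.smul_eq_mk_mul, mul_left_comm]
  · intro he
    set σ : Fin k → Fin k := fun i => (e ⟨i, 1⟩).1
    set c : Fin k → G ⧸ H := fun i => (e ⟨i, 1⟩).2
    have he_apply (i : Fin k) (q : G ⧸ H) : e ⟨i, q⟩ = ⟨σ i, c i * q⟩ := by
      obtain ⟨g, rfl⟩ := QuotientGroup.mk_surjective q
      calc e ⟨i, g⟩ = e (g • ⟨i, 1⟩) := by simp [QuotientGroup.smul_eq_mk_mul]
        _ = g • e ⟨i, 1⟩ := mem_equivariantPerms.1 he g _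
        _ = ⟨σ i, c i * g⟩ := by
          rw [← Sigma.eta (e ⟨i, 1⟩), Sigma.smul_mk, QuotientGroup.smul_eq_mk_mul, mul_comm]
    have hσ : Function.Injective σ := by
      intro i j hij
      have : e ⟨i, 1⟩ = e ⟨j, (c j)⁻¹ * c i⟩ := by
        rw [he_apply, he_apply, hij, mul_inv_cancel_left, mul_one]
      exact congrArg Sigma.fst (e.injective this)
    let τ : Perm (Fin k) := Equiv.ofBijective σ hσ.bijective_of_finite
    refine ⟨⟨fun j => c (τ.symm j), τ⟩, Perm.ext fun ⟨i, q⟩ => ?_⟩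
    simp [he_apply, τ]

noncomputable def equivariantPermsEquivWreath :
    equivariantPerms G (Σ _ : Fin k, G ⧸ H) ≃* wreath (G ⧸ H) k :=
  ((MonoidHom.ofInjective (wreathToPerm_injective _ k)).trans
    (MulEquiv.subgroupCongr (range_wreathToPerm H k))).symm

end WreathQuotient

section ConstantStabilizer

variable {G Y : Type*} [CommGroup G] [MulAction G Y] {H : Subgroup G}
  (hY : ∀ y : Y, stabilizer G y = H) {k : ℕ}

noncomputable def sigmaQuotientEquiv (hk : orbitRel.Quotient G Y ≃ Fin k) :
    (Σ _ : Fin k, G ⧸ H) ≃ Y :=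
  calc (Σ _ : Fin k, G ⧸ H) ≃ Σ _ : orbitRel.Quotient G Y, G ⧸ H :=
      sigmaCongrLeft (β := fun _ => G ⧸ H) hk.symm
    _ ≃ Σ ω : orbitRel.Quotient G Y, G ⧸ stabilizer G ω.out :=
      sigmaCongrRight fun ω => (Subgroup.quotientEquivOfEq (hY ω.out)).symm
    _ ≃ Y := (selfEquivSigmaOrbitsQuotientStabilizer G Y).symm

theorem sigmaQuotientEquiv_mk (hk : orbitRel.Quotient G Y ≃ Fin k) (i : Fin k) (a : G) :
    sigmaQuotientEquiv hY hk ⟨i, a⟩ = a • (hk.symm i).out := by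
  simp only [sigmaQuotientEquiv]
  rfl

theorem sigmaQuotientEquiv_smul (hk : orbitRel.Quotient G Y ≃ Fin k) (g : G)
    (p : Σ _ : Fin k, G ⧸ H) :
    sigmaQuotientEquiv hY hk (g • p) = g • sigmaQuotientEquiv hY hk p := by
  obtain ⟨i, q⟩ := p
  induction q using QuotientGroup.induction_on with
  | H a =>
    rw [Sigma.smul_mk, MulAction.Quotient.smul_mk, sigmaQuotientEquiv_mk, sigmaQuotientEquiv_mk,
      smul_eq_mul, mul_smul]

noncomputable def equivariantPermsEquivWreathOfStabilizerEq [Finite (orbitRel.Quotient G Y)]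
    (hk : Nat.card (orbitRel.Quotient G Y) = k) : equivariantPerms G Y ≃* wreath (G ⧸ H) k :=
  (equivariantPermsCongr _ <|
    sigmaQuotientEquiv_smul hY ((Finite.equivFin _).trans (finCongr hk))).symm.trans
      (equivariantPermsEquivWreath H k)

end ConstantStabilizer

theorem SubMulAction.card_orbitRel_quotient {G X : Type*} [Group G] [MulAction G X]
    (p : SubMulAction G X) :
    Nat.card (orbitRel.Quotient G p) = Nat.card {O : Set X | ∃ x ∈ p, O = orbit G x} := by
  have hinj : Function.Injective fun ω : orbitRel.Quotient G p => Subtype.val '' ω.orbit :=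
    (Set.image_injective.2 Subtype.val_injective).comp orbitRel.Quotient.orbit_injective
  rw [← Nat.card_range_of_injective hinj]
  congr
  ext O
  constructor
  · rintro ⟨ω, rfl⟩
    induction ω using Quotient.inductionOn' with
    | h x => exact ⟨x, x.2, SubMulAction.val_image_orbit x⟩
  · rintro ⟨x, hx, rfl⟩
    exact ⟨Quotient.mk'' ⟨x, hx⟩, SubMulAction.val_image_orbit _⟩

section Shift

variable (G A : Type*) [CommGroup G]

-- `confMul` is a right action; as `G` is abelian it is also a left action.
abbrev shiftAction : MulAction G (G → A) where
  smul g x := confMul x g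
  one_smul x := funext fun h => show x (h * 1⁻¹) = x h by rw [inv_one, mul_one]
  mul_smul g g' x := funext fun h =>
    show x (h * (g * g')⁻¹) = x (h * g⁻¹ * g'⁻¹) by rw [mul_inv, mul_assoc]

attribute [local instance] shiftAction

theorem ICA_eq_equivariantPerms : ICA G A = equivariantPerms G (G → A) := by
  ext e
  rw [mem_equivariantPerms]
  exact forall_comm

theorem card_orbitRel_quotient_stabilizerFiber (H : Subgroup G) :
    Nat.card (orbitRel.Quotient G (stabilizerFiber (G → A) H)) = alphaH G A H := by
  have hstab (x : G → A) :
      (∀ g : G, confMul x g = x ↔ g ∈ H) ↔ x ∈ stabilizerFiber (G → A) H :=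
    (mem_stabilizerFiber.trans SetLike.ext_iff).symm
  have horbit (x : G → A) : orbitOf x = orbit G x :=
    Set.ext fun y => exists_congr fun g => eq_comm
  simp_rw [SubMulAction.card_orbitRel_quotient, alphaH, hstab, horbit]

end Shift

theorem stmt12_general (G A : Type*) [CommGroup G] [Fintype G] [Fintype A] :
    Nonempty (ICA G A ≃* ((H : Subgroup G) → wreath (G ⧸ H) (alphaH G A H))) := by
  let := shiftAction G A
  exact ⟨(MulEquiv.subgroupCongr (ICA_eq_equivariantPerms G A)).trans <|
    equivariantPermsEquivPiStabilizerFiber.trans <| MulEquiv.piCongrRight fun H =>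
      equivariantPermsEquivWreathOfStabilizerEq (fun y => stabilizer_stabilizerFiber y)
        (card_orbitRel_quotient_stabilizerFiber G A H)⟩

/-- For a finite abelian group `G` and a finite set `A` of size `q ≥ 2`, the group of
invertible cellular automata decomposes as
`ICA(G;A) ≅ ∏_{H ≤ G} (G/H) ≀ Sym(α_H)`. -/
theorem stmt12 (G A : Type*) [CommGroup G] [Fintype G] [Fintype A]
    (hA : 2 ≤ Fintype.card A) :
    Nonempty (ICA G A ≃* ((H : Subgroup G) → wreath (G ⧸ H) (alphaH G A H))) :=
  stmt12_general G A
end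

section
/- Let G be a finite group of size n ≥ 2 and A a finite set of size q ≥ 2. Any generating set T of the monoid CA(G;A) of all cellular automata over G and A must contain an element whose minimal memory set is G itself; equivalently, the cellular automata admitting a memory set of size at most n−1 do not generate CA(G;A). -/
/-- The monoid `CA(G;A)` of all cellular automata (`G`-equivariant transformations of `A^G`)
as a submonoid of the full transformation monoid of `A^G`. -/
def CAmonoid (G A : Type*) [Group G] : Submonoid (Function.End (G → A)) where
  carrier := {τ | ∀ x g, τ (confMul x g) = confMul (τ x) g}
  one_mem' := fun _ _ => rfl
  mul_mem' := by
    intro a b ha hb x g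
    show a (b (confMul x g)) = confMul (a (b x)) g
    rw [hb x g, ha (b x) g]

/-- `τ` admits the memory set `S`. -/
def hasMemorySet {G A : Type*} [Group G] (τ : Function.End (G → A)) (S : Finset G) : Prop :=
  ∃ μ : ({g : G // g ∈ S} → A) → A, ∀ (x : G → A) (g : G), τ x g = μ (fun s => x (s.1 * g))

/-!
The transformation `τ = update id a b` collapsing the constant configuration `a` onto `b` is
a cellular automaton. Call a self-map of `A^G` good if it maps constants to constants and is
either injective or misses some nonconstant configuration: good maps form a submonoid and `τ`
is not good, so it suffices that every cellular automaton `σ` with a memory set `S ≠ G` is good.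
If such a `σ` were non-injective yet hit every nonconstant configuration, it would permute the
nonconstant configurations and miss some constant `a`. For `g ∉ S` the value `σ x 1` does not
depend on `x g`, so `|A|` divides `#{x | σ x 1 = a}`; but `σ` maps this set bijectively onto
`{y | y 1 = a} \ {a}`, of size `|A| ^ (n - 1) - 1`.
-/

open Function Set

theorem injOn_of_preimage_subset_of_subset_range {α : Type*} {f : α → α} {s : Set α}
    (hs : s.Finite) (hpre : f ⁻¹' s ⊆ s) (hsurj : s ⊆ range f) : InjOn f s := by
  refine injOn_of_ncard_image_eq (le_antisymm (ncard_image_le hs) ?_) hs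
  calc s.ncard = (f '' (f ⁻¹' s)).ncard := by rw [image_preimage_eq_of_subset hsurj]
    _ ≤ (f '' s).ncard := ncard_le_ncard (image_mono hpre) (hs.image f)

theorem mapsTo_compl_of_injective {α : Type*} {f : α → α} {s : Set α} (hs : s.Finite)
    (hf : Injective f) (h : MapsTo f s s) : MapsTo f sᶜ sᶜ := by
  intro x hx hfx
  obtain ⟨y, hy, hyx⟩ := ((hs.injOn_iff_bijOn_of_mapsTo h).mp hf.injOn).surjOn hfx
  exact hx (hf hyx ▸ hy)

section Configurations

variable {ι A : Type*}

theorem card_dvd_ncard_of_forall_update_mem_iff [DecidableEq ι] (s : Set (ι → A)) (p : ι)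
    (hs : ∀ x t, update x p t ∈ s ↔ x ∈ s) : Nat.card A ∣ s.ncard := by
  set e := (Equiv.funSplitAt p A).trans (Equiv.prodComm _ _)
  set R : ({j // j ≠ p} → A) → Prop := fun z => ∃ t, e.symm (z, t) ∈ s
  have hsplit : ∀ x, x ∈ s ↔ R (e x).1 := by
    intro x
    have hupd : ∀ t, e.symm ((e x).1, t) = update x p t := by
      intro t
      funext j
      by_cases h : j = p <;> simp [e, h]
    simp only [R, hupd, hs]
    exact ⟨fun h => ⟨x p, h⟩, fun ⟨_, h⟩ => h⟩
  rw [← Nat.card_coe_set_eq, Nat.card_congr ((e.subtypeEquiv hsplit).trans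
    Equiv.prodSubtypeFstEquivSubtypeProd), Nat.card_prod]
  exact dvd_mul_left _ _

theorem not_compl_range_const_subset_range [Finite ι] [Nontrivial ι] [Finite A] [DecidableEq ι]
    {F : (ι → A) → ι → A} (hconst : MapsTo F (range (@const A ι)) (range (@const A ι)))
    (hF : ¬ Injective F) {i j : ι} (hij : ∀ x t, F (update x j t) i = F x i) :
    ¬ (range (@const A ι))ᶜ ⊆ range F := by
  intro hsurj
  set N := (range (@const A ι))ᶜ
  have hinj : InjOn F N :=
    injOn_of_preimage_subset_of_subset_range (toFinite N) (fun x hx hxc => hx (hconst hxc)) hsurj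
  obtain ⟨z, hz⟩ : ∃ z, z ∉ range F := by
    simpa [Surjective] using mt Finite.injective_iff_surjective.mpr hF
  obtain ⟨a, rfl⟩ : z ∈ range (@const A ι) := not_not.mp fun h => hz (hsurj h)
  set X := {x | F x i = a}
  set Y := {y : ι → A | y i = a}
  have hXN : X ⊆ N := by
    rintro x hx ⟨c, rfl⟩
    obtain ⟨d, hd⟩ := hconst (mem_range_self c)
    have hda : d = a := by rw [← hx, ← hd]; rfl
    exact hz ⟨const ι c, by rw [← hd, hda]⟩
  have himage : F '' X = Y \ {const ι a} := by
    ext y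
    constructor
    · rintro ⟨x, hx, rfl⟩
      exact ⟨hx, fun h => hz ⟨x, h⟩⟩
    · rintro ⟨hy, hya⟩
      have hyN : y ∈ N := by
        rintro ⟨c, rfl⟩
        exact hya (congrArg (const ι) hy)
      obtain ⟨x, rfl⟩ := hsurj hyN
      exact ⟨x, hy, rfl⟩
  have hcard : X.ncard + 1 = Y.ncard := by
    rw [← (hinj.mono hXN).ncard_image, himage]
    exact ncard_sdiff_singleton_add_one rfl
  obtain ⟨p, hp⟩ := exists_ne i
  have hX : Nat.card A ∣ X.ncard :=
    card_dvd_ncard_of_forall_update_mem_iff X j fun x t => by simp only [X, mem_ofPred_eq, hij]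
  have hY : Nat.card A ∣ Y.ncard :=
    card_dvd_ncard_of_forall_update_mem_iff Y p fun x t => by
      simp only [Y, mem_ofPred_eq, update_of_ne hp.symm]
  have hA : Nat.card A = 1 := Nat.dvd_one.mp ((Nat.dvd_add_right hX).mp (hcard ▸ hY))
  have : Subsingleton A := (Nat.card_eq_one_iff_unique.mp hA).1
  exact hF (injective_of_subsingleton F)

def injOrMissesNonconst (ι A : Type*) [Finite ι] [Finite A] :
    Submonoid (Function.End (ι → A)) where
  carrier := {F | MapsTo F (range (@const A ι)) (range (@const A ι)) ∧
    (Injective F ∨ ¬ (range (@const A ι))ᶜ ⊆ range F)}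
  one_mem' := ⟨mapsTo_id _, Or.inl injective_id⟩
  mul_mem' := by
    rintro σ ρ ⟨hσc, hσ | hσ⟩ ⟨hρc, hρ⟩
    · refine ⟨hσc.comp hρc, ?_⟩
      rcases hρ with hρ | hρ
      · exact Or.inl (hσ.comp hρ)
      · refine Or.inr fun hcov => hρ fun y hy => ?_
        obtain ⟨x, hx⟩ := hcov (mapsTo_compl_of_injective (toFinite _) hσ hσc hy)
        exact ⟨x, hσ hx⟩
    · exact ⟨hσc.comp hρc, Or.inr fun hcov => hσ (hcov.trans (range_comp_subset_range ρ σ))⟩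

theorem update_id_const_notMem_injOrMissesNonconst [Finite ι] [Nonempty ι] [Finite A]
    [DecidableEq (ι → A)] {a b : A} (hab : a ≠ b) :
    (update id (const ι a) (const ι b) : Function.End (ι → A)) ∉ injOrMissesNonconst ι A := by
  rintro ⟨-, hinj | hmiss⟩
  · have hba : const ι b ≠ const ι a := const_injective.ne hab.symm
    exact hba (@hinj (const ι a) (const ι b) (by rw [update_self, update_of_ne hba]; rfl)).symm
  · exact hmiss fun y hy => ⟨y, update_of_ne (fun h => hy ⟨a, h.symm⟩) _ _⟩

end Configurations

section CellularAutomata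

variable {G A : Type*} [Group G]

theorem confMul_const (c : A) (g : G) : confMul (const G c) g = const G c := rfl

theorem confMul_injective (g : G) : Injective fun x : G → A => confMul x g := by
  intro x y hxy
  funext h
  simpa [confMul] using congrFun hxy (h * g)

theorem mapsTo_range_const_of_mem_CAmonoid {σ : Function.End (G → A)}
    (hσ : σ ∈ CAmonoid G A) : MapsTo σ (range (@const A G)) (range (@const A G)) := by
  rintro _ ⟨c, rfl⟩
  refine ⟨σ (const G c) 1, funext fun h => ?_⟩
  have := congrFun (hσ (const G c) h) h
  rw [confMul_const] at this
  simpa [confMul] using this.symm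

theorem update_id_const_mem_CAmonoid [DecidableEq (G → A)] (a b : A) :
    (update id (const G a) (const G b) : Function.End (G → A)) ∈ CAmonoid G A := by
  intro x g
  by_cases hx : x = const G a
  · subst hx
    show update id _ _ (const G a) = confMul (update id _ _ (const G a)) g
    simp only [update_self]
    rfl
  · have hxg : confMul x g ≠ const G a := fun h => hx (confMul_injective g (h.trans rfl))
    show update id _ _ (confMul x g) = confMul (update id _ _ x) g
    rw [update_of_ne hxg, update_of_ne hx]
    rfl

theorem hasMemorySet.apply_update_one_of_notMem [DecidableEq G] {σ : Function.End (G → A)}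
    {S : Finset G} (hS : hasMemorySet σ S) {j : G} (hj : j ∉ S) (x : G → A) (t : A) :
    σ (update x j t) 1 = σ x 1 := by
  obtain ⟨μ, hμ⟩ := hS
  rw [hμ, hμ]
  congr 1
  funext s
  exact update_of_ne (by rw [mul_one]; exact ne_of_mem_of_not_mem s.2 hj) _ _

end CellularAutomata

/-- Any generating set `T` of the monoid `CA(G;A)` must contain a cellular automaton
whose minimal memory set is `G` itself, i.e. some `τ ∈ T` admitting no memory set other
than `G` (equivalently, CA with memory sets of size `≤ n - 1` do not generate `CA(G;A)`). -/
theorem stmt13 {G A : Type*} [Group G] [Fintype G] [Fintype A]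
    (hG : 2 ≤ Fintype.card G) (hA : 2 ≤ Fintype.card A)
    (T : Set (Function.End (G → A))) (hT : Submonoid.closure T = CAmonoid G A) :
    ∃ τ ∈ T, ∀ S : Finset G, hasMemorySet τ S → S = Finset.univ := by
  classical
  by_contra! hcon
  have : Nontrivial G := Fintype.one_lt_card_iff_nontrivial.mp hG
  obtain ⟨a, b, hab⟩ := Fintype.exists_pair_of_one_lt_card hA
  have hT_le : Submonoid.closure T ≤ injOrMissesNonconst G A := by
    refine Submonoid.closure_le.mpr fun σ hσT => ?_
    have hσ : σ ∈ CAmonoid G A := hT ▸ Submonoid.subset_closure hσT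
    refine ⟨mapsTo_range_const_of_mem_CAmonoid hσ, or_iff_not_imp_left.mpr fun hinj => ?_⟩
    obtain ⟨S, hS, hSne⟩ := hcon σ hσT
    obtain ⟨j, -, hj⟩ := Finset.exists_of_ssubset (Finset.ssubset_univ_iff.mpr hSne)
    exact not_compl_range_const_subset_range (mapsTo_range_const_of_mem_CAmonoid hσ) hinj
      (hS.apply_update_one_of_notMem hj)
  exact update_id_const_notMem_injOrMissesNonconst hab
    (hT_le (hT ▸ update_id_const_mem_CAmonoid a b))
end

section
/- Let G be a finite group of size n ≥ 2, A = {0,...,q−1} with q ≥ 2, S a proper subset of G of size s < n, and μ : A^S → A a local function such that the induced cellular automaton τ maps the set of non-constant configurations bijectively onto itself and such that some constant configuration k is not in the image of the constant configurations under τ. Then n(q−1)(q^{n−1}−1) = n·q^{n−s}·Σ_{y ∈ A^S non-constant}(1−δ((y)μ,k)) + n(q^{n−s}−1)·q, contradicting that (q−1)(q^{n−1}−1) is not divisible by q. -/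
open Finset

lemma fiber_card {G : Type*} [Fintype G] [DecidableEq G] (q : ℕ) (P : G → Prop) [DecidablePred P]
    (y : {g : G // P g} → Fin q) :
    (univ.filter fun x : G → Fin q => (fun i : {g : G // P g} => x i.1) = y).card
      = q ^ (Fintype.card {g : G // ¬ P g}) := by
  classical
  rw [← Fintype.card_subtype]
  have e : {x : G → Fin q // (fun i : {g : G // P g} => x i.1) = y} ≃ ({g : G // ¬ P g} → Fin q) :=
    { toFun := fun x i => x.1 i.1
      invFun := fun w => ⟨fun g => if h : P g then y ⟨g, h⟩ else w ⟨g, h⟩, by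
        funext i; simp [i.2]⟩
      left_inv := fun x => Subtype.ext (funext fun g => by
        by_cases h : P g
        · simpa [h] using (congrFun x.2 ⟨g, h⟩).symm
        · simp [h])
      right_inv := fun w => by funext i; simp [i.2] }
  rw [Fintype.card_congr e, Fintype.card_fun, Fintype.card_fin]

lemma not_dvd_aux (q n : ℕ) (hq : 2 ≤ q) (hn : 2 ≤ n) :
    ¬ q ∣ (q - 1) * (q ^ (n - 1) - 1) := by
  intro hdvd
  have hm : 1 ≤ q ^ (n-1) := Nat.one_le_pow _ _ (by omega)
  have key : ∀ m : ℕ, 1 ≤ m → q ∣ m → Nat.Coprime q (m - 1) := by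
    intro m h1 hqm
    refine Nat.Coprime.coprime_dvd_left hqm ?_
    have : m = (m - 1) + 1 := by omega
    rw [this]
    simp [Nat.Coprime, Nat.add_comm, Nat.gcd_add_self_left]
  have c1 : Nat.Coprime q (q - 1) := key q (by omega) dvd_rfl
  have c2 : Nat.Coprime q (q ^ (n-1) - 1) := key _ hm (dvd_pow_self q (by omega : n-1 ≠ 0))
  have := Nat.eq_one_of_dvd_coprimes (c1.mul_right c2) dvd_rfl hdvd
  omega

lemma pow_aux (q N : ℕ) (h : 1 ≤ N) : q ^ N = q ^ (N - 1) * q := by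
  conv_lhs => rw [show N = (N - 1) + 1 from by omega]
  rw [pow_succ]

lemma dist_aux (q m : ℕ) : (q - 1) * m = m * q - m := by
  rw [Nat.sub_mul, one_mul, mul_comm]

lemma sub_aux (m B T : ℕ) (h : m + B = T) : B = T - m := by omega

lemma add_aux (A B c T : ℕ) (hA : A = c) (h : A + B = T) : B + c = T := by omega

lemma sub_one_aux (a b : ℕ) (h : a + 1 = b) : a = b - 1 := by omega

set_option maxHeartbeats 2000000 in
/-- Let `G` be a finite group of size `n ≥ 2`, `A = Fin q` with `q ≥ 2`, `S ⊊ G` a memory set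
of size `s < n`, and `μ : A^S → A` a local function. If the induced cellular automaton
`τ x g = μ ((x)|_{Sg})` maps the non-constant configurations bijectively onto themselves and
some constant configuration `k` is not in the image of the constant configurations, then
`n(q−1)(q^{n−1}−1) = n·q^{n−s}·Σ_{y ∈ A^S nonconstant}(1−δ(μ(y),k)) + n·(q^{n−s}−1)·q`,
contradicting that `(q−1)(q^{n−1}−1)` is not divisible by `q`. -/
theorem stmt14 {G : Type*} [Group G] [Fintype G] (q : ℕ) (hq : 2 ≤ q)
    (hn : 2 ≤ Fintype.card G)
    (S : Finset G) (hs : S.card < Fintype.card G)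
    (μ : ({g : G // g ∈ S} → Fin q) → Fin q)
    (τ : (G → Fin q) → (G → Fin q))
    (hτ : ∀ (x : G → Fin q) (g : G), τ x g = μ (fun s => x (s.1 * g)))
    (hbij : Set.BijOn τ {x : G → Fin q | ¬∃ c, ∀ g, x g = c}
      {x : G → Fin q | ¬∃ c, ∀ g, x g = c})
    (k : Fin q) (hk : ∀ c : Fin q, τ (fun _ => c) ≠ fun _ => k) :
    Fintype.card G * (q - 1) * (q ^ (Fintype.card G - 1) - 1) =
        Fintype.card G * q ^ (Fintype.card G - S.card) *
          Nat.card {y : {g : G // g ∈ S} → Fin q // (¬∃ c, ∀ i, y i = c) ∧ μ y ≠ k} +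
        Fintype.card G * (q ^ (Fintype.card G - S.card) - 1) * q ∧
      ¬ q ∣ (q - 1) * (q ^ (Fintype.card G - 1) - 1) := by
  classical
  refine ⟨?_, not_dvd_aux q (Fintype.card G) hq hn⟩
  obtain ⟨g₁, hg₁⟩ := Fintype.exists_ne_of_one_lt_card (by omega) (1 : G)
  -- a nonconstant configuration exists
  have hx0 : ∃ x : G → Fin q, ¬∃ c, ∀ g, x g = c := by
    refine ⟨fun g => if g = 1 then ⟨0, by omega⟩ else ⟨1, by omega⟩, ?_⟩
    rintro ⟨c, hc⟩
    have h1 : (⟨0, by omega⟩ : Fin q) = c := by simpa using hc 1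
    have h2 : (⟨1, by omega⟩ : Fin q) = c := by simpa [hg₁] using hc g₁
    have h12 := h1.trans h2.symm
    simp [Fin.ext_iff] at h12
  -- S is nonempty
  have hS : S.Nonempty := by
    rw [Finset.nonempty_iff_ne_empty]
    rintro rfl
    obtain ⟨x0, hx0'⟩ := hx0
    have hτx := hbij.mapsTo hx0'
    refine hτx ⟨τ x0 1, fun g => ?_⟩
    rw [hτ x0 g, hτ x0 1]
    congr 1
    funext s
    exact absurd s.2 (Finset.notMem_empty s.1)
  obtain ⟨g₀, hg₀⟩ := hS
  have hcardfun : Fintype.card (G → Fin q) = q ^ Fintype.card G := by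
    simp [Fintype.card_fun]
  have hcard_compl : Fintype.card {g : G // ¬ g ∈ S} = Fintype.card G - S.card := by
    rw [Fintype.card_subtype_compl]
    congr 1
    exact Fintype.card_coe S
  have fiberS : ∀ y : {g : G // g ∈ S} → Fin q,
      (univ.filter fun x : G → Fin q => (fun i : {g : G // g ∈ S} => x i.1) = y).card
        = q ^ (Fintype.card G - S.card) := by
    intro y
    have h := fiber_card q (fun g => g ∈ S) y
    rw [hcard_compl] at h
    convert h using 2
    congr!
  have fiber_eval : ∀ g : G,
      (univ.filter fun x : G → Fin q => x g = k).card = q ^ (Fintype.card G - 1) := by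
    intro g
    have h := fiber_card q (fun h => h = g) (fun _ => k)
    rw [Fintype.card_subtype_compl, Fintype.card_subtype_eq] at h
    have heq : (univ.filter fun x : G → Fin q => x g = k)
        = univ.filter fun x : G → Fin q =>
            (fun i : {h : G // h = g} => x i.1) = fun _ => k := by
      refine Finset.filter_congr fun x _ => ?_
      constructor
      · intro hxg
        funext i
        rcases i with ⟨h', rfl⟩
        exact hxg
      · intro hfun
        exact congrFun hfun ⟨g, rfl⟩
    rw [heq]
    convert h using 2
    congr!
  -- total weight sum
  have h_total : ∑ x : G → Fin q, (univ.filter fun g : G => x g ≠ k).card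
      = Fintype.card G * ((q - 1) * q ^ (Fintype.card G - 1)) := by
    have step : ∀ g : G, (univ.filter fun x : G → Fin q => ¬ x g = k).card
        = (q - 1) * q ^ (Fintype.card G - 1) := by
      intro g
      have hsplit := Finset.card_filter_add_card_filter_not
        (s := (univ : Finset (G → Fin q))) (fun x => x g = k)
      rw [fiber_eval g, card_univ, hcardfun,
        pow_aux q (Fintype.card G) (by linarith)] at hsplit
      rw [dist_aux]
      exact sub_aux _ _ _ hsplit
    calc ∑ x : G → Fin q, (univ.filter fun g : G => x g ≠ k).card
        = ∑ x : G → Fin q, ∑ g : G, (if ¬ x g = k then 1 else 0) := by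
          refine Finset.sum_congr rfl fun x _ => ?_
          rw [Finset.card_filter]
      _ = ∑ g : G, ∑ x : G → Fin q, (if ¬ x g = k then 1 else 0) := Finset.sum_comm
      _ = ∑ g : G, ((q - 1) * q ^ (Fintype.card G - 1)) := by
          refine Finset.sum_congr rfl fun g _ => ?_
          rw [Finset.sum_boole, Nat.cast_id, step g]
      _ = Fintype.card G * ((q - 1) * q ^ (Fintype.card G - 1)) := by
          rw [Finset.sum_const, card_univ, smul_eq_mul]
  -- sum over constants
  have h_const : ∑ x ∈ univ.filter (fun x : G → Fin q => ∃ c, ∀ g, x g = c),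
      (univ.filter fun g : G => x g ≠ k).card = (q - 1) * Fintype.card G := by
    have himg : univ.filter (fun x : G → Fin q => ∃ c, ∀ g, x g = c)
        = univ.image (fun c : Fin q => (fun _ : G => c)) := by
      ext x
      simp only [mem_filter, mem_univ, true_and, mem_image]
      constructor
      · rintro ⟨c, hc⟩
        exact ⟨c, funext fun g => (hc g).symm⟩
      · rintro ⟨c, rfl⟩
        exact ⟨c, fun g => rfl⟩
    rw [himg, Finset.sum_image (fun c _ c' _ h => congrFun h 1)]
    have hterm : ∀ c : Fin q, (univ.filter fun g : G => (fun _ : G => c) g ≠ k).card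
        = if c = k then 0 else Fintype.card G := by
      intro c
      split_ifs with h
      · simp [h]
      · simp [h, Finset.card_univ]
    rw [Finset.sum_congr rfl fun c _ => hterm c, Finset.sum_ite, Finset.sum_const,
      Finset.sum_const, smul_eq_mul, smul_eq_mul, mul_zero, zero_add]
    congr 1
    have : (univ.filter fun c : Fin q => ¬ c = k) = univ.erase k := by
      ext c; simp [Finset.mem_erase]
    rw [this, Finset.card_erase_of_mem (mem_univ k), card_univ, Fintype.card_fin]
  -- split total into constants and nonconstants
  have hE1 : (∑ x ∈ univ.filter (fun x : G → Fin q => ¬∃ c, ∀ g, x g = c),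
        (univ.filter fun g : G => x g ≠ k).card) + (q - 1) * Fintype.card G
      = Fintype.card G * ((q - 1) * q ^ (Fintype.card G - 1)) := by
    have hsplit := Finset.sum_filter_add_sum_filter_not (univ : Finset (G → Fin q))
      (fun x => ∃ c, ∀ g, x g = c) (fun x => (univ.filter fun g : G => x g ≠ k).card)
    rw [h_total] at hsplit
    exact add_aux _ _ _ _ h_const hsplit
  have hmem : ∀ x : G → Fin q,
      x ∈ univ.filter (fun x : G → Fin q => ¬∃ c, ∀ g, x g = c) ↔ ¬∃ c, ∀ g, x g = c := by
    intro x; simp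
  -- bijection step
  have hE2 : ∑ x ∈ univ.filter (fun x : G → Fin q => ¬∃ c, ∀ g, x g = c),
        (univ.filter fun g : G => τ x g ≠ k).card
      = ∑ x ∈ univ.filter (fun x : G → Fin q => ¬∃ c, ∀ g, x g = c),
        (univ.filter fun g : G => x g ≠ k).card := by
    refine Finset.sum_bij (fun x _ => τ x) ?_ ?_ ?_ (fun a ha => rfl)
    · intro a ha
      rw [hmem] at ha ⊢
      exact hbij.mapsTo ha
    · intro a₁ h₁ a₂ h₂ h
      exact hbij.injOn ((hmem _).1 h₁) ((hmem _).1 h₂) h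
    · intro b hb
      obtain ⟨a, ha, hab⟩ := hbij.surjOn ((hmem _).1 hb)
      exact ⟨a, (hmem _).2 ha, hab⟩
  -- shift invariance
  have hshift : ∀ g : G,
      (∑ x ∈ univ.filter (fun x : G → Fin q => ¬∃ c, ∀ g, x g = c),
        if ¬ μ (fun s : {g : G // g ∈ S} => x (s.1 * g)) = k then 1 else 0)
      = ∑ x ∈ univ.filter (fun x : G → Fin q => ¬∃ c, ∀ g, x g = c),
        if ¬ μ (fun s : {g : G // g ∈ S} => x s.1) = k then 1 else 0 := by
    intro g
    refine Finset.sum_bij (fun x _ => fun h => x (h * g)) ?_ ?_ ?_ (fun a ha => rfl)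
    · intro a ha
      rw [hmem] at ha ⊢
      rintro ⟨c, hc⟩
      refine ha ⟨c, fun h => ?_⟩
      simpa [inv_mul_cancel_right] using hc (h * g⁻¹)
    · intro a₁ h₁ a₂ h₂ h
      funext h'
      simpa [inv_mul_cancel_right] using congrFun h (h' * g⁻¹)
    · intro b hb
      refine ⟨fun h => b (h * g⁻¹), ?_, ?_⟩
      · rw [hmem] at hb ⊢
        rintro ⟨c, hc⟩
        refine hb ⟨c, fun h => ?_⟩
        simpa [mul_inv_cancel_right] using hc (h * g)
      · funext h
        simp [mul_inv_cancel_right]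
  -- rewrite the weight of τ x and collapse the g-sum
  have hE3 : ∑ x ∈ univ.filter (fun x : G → Fin q => ¬∃ c, ∀ g, x g = c),
        (univ.filter fun g : G => τ x g ≠ k).card
      = Fintype.card G * ∑ x ∈ univ.filter (fun x : G → Fin q => ¬∃ c, ∀ g, x g = c),
          (if ¬ μ (fun s : {g : G // g ∈ S} => x s.1) = k then 1 else 0) := by
    calc ∑ x ∈ univ.filter (fun x : G → Fin q => ¬∃ c, ∀ g, x g = c),
          (univ.filter fun g : G => τ x g ≠ k).card
        = ∑ x ∈ univ.filter (fun x : G → Fin q => ¬∃ c, ∀ g, x g = c),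
            ∑ g : G, (if ¬ μ (fun s : {g : G // g ∈ S} => x (s.1 * g)) = k then 1 else 0) := by
          refine Finset.sum_congr rfl fun x _ => ?_
          rw [Finset.card_filter]
          refine Finset.sum_congr rfl fun g _ => ?_
          simp only [hτ]
      _ = ∑ g : G, ∑ x ∈ univ.filter (fun x : G → Fin q => ¬∃ c, ∀ g, x g = c),
            (if ¬ μ (fun s : {g : G // g ∈ S} => x (s.1 * g)) = k then 1 else 0) :=
          Finset.sum_comm
      _ = ∑ _g : G, ∑ x ∈ univ.filter (fun x : G → Fin q => ¬∃ c, ∀ g, x g = c),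
            (if ¬ μ (fun s : {g : G // g ∈ S} => x s.1) = k then 1 else 0) :=
          Finset.sum_congr rfl fun g _ => hshift g
      _ = Fintype.card G * ∑ x ∈ univ.filter (fun x : G → Fin q => ¬∃ c, ∀ g, x g = c),
            (if ¬ μ (fun s : {g : G // g ∈ S} => x s.1) = k then 1 else 0) := by
          rw [Finset.sum_const, card_univ, smul_eq_mul]
  -- fiberwise decomposition over restrictions
  have hfib : ∑ x ∈ univ.filter (fun x : G → Fin q => ¬∃ c, ∀ g, x g = c),
        (if ¬ μ (fun s : {g : G // g ∈ S} => x s.1) = k then 1 else 0)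
      = ∑ y : {g : G // g ∈ S} → Fin q, (if ¬ μ y = k then 1 else 0) *
          ((univ.filter (fun x : G → Fin q => ¬∃ c, ∀ g, x g = c)).filter
            (fun x => (fun s : {g : G // g ∈ S} => x s.1) = y)).card := by
    rw [← Finset.sum_fiberwise (univ.filter (fun x : G → Fin q => ¬∃ c, ∀ g, x g = c))
      (fun x => (fun s : {g : G // g ∈ S} => x s.1))
      (fun x => if ¬ μ (fun s : {g : G // g ∈ S} => x s.1) = k then 1 else 0)]
    refine Finset.sum_congr rfl fun y _ => ?_
    have hc : ∀ x ∈ (univ.filter (fun x : G → Fin q => ¬∃ c, ∀ g, x g = c)).filter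
        (fun x => (fun s : {g : G // g ∈ S} => x s.1) = y),
        (if ¬ μ (fun s : {g : G // g ∈ S} => x s.1) = k then 1 else 0)
          = (if ¬ μ y = k then 1 else 0) := by
      intro x hx
      rw [(Finset.mem_filter.1 hx).2]
    rw [Finset.sum_congr rfl hc, Finset.sum_const, smul_eq_mul, mul_comm]
  -- fiber cardinality
  have hfibcount : ∀ y : {g : G // g ∈ S} → Fin q,
      ((univ.filter (fun x : G → Fin q => ¬∃ c, ∀ g, x g = c)).filter
          (fun x => (fun s : {g : G // g ∈ S} => x s.1) = y)).card
        + (if ∃ c, ∀ i, y i = c then 1 else 0) = q ^ (Fintype.card G - S.card) := by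
    intro y
    have hsplit := Finset.card_filter_add_card_filter_not
      (s := univ.filter (fun x : G → Fin q => (fun s : {g : G // g ∈ S} => x s.1) = y))
      (fun x => ∃ c, ∀ g, x g = c)
    rw [fiberS y] at hsplit
    have e1 : (univ.filter (fun x : G → Fin q =>
          (fun s : {g : G // g ∈ S} => x s.1) = y)).filter (fun x => ¬∃ c, ∀ g, x g = c)
        = (univ.filter (fun x : G → Fin q => ¬∃ c, ∀ g, x g = c)).filter
            (fun x => (fun s : {g : G // g ∈ S} => x s.1) = y) := by
      ext x
      simp only [Finset.mem_filter, mem_univ, true_and]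
      tauto
    have e2 : ((univ.filter (fun x : G → Fin q =>
          (fun s : {g : G // g ∈ S} => x s.1) = y)).filter (fun x => ∃ c, ∀ g, x g = c)).card
        = (if ∃ c, ∀ i, y i = c then 1 else 0) := by
      split_ifs with hyc
      · obtain ⟨c, hc⟩ := hyc
        have : (univ.filter (fun x : G → Fin q =>
            (fun s : {g : G // g ∈ S} => x s.1) = y)).filter (fun x => ∃ c, ∀ g, x g = c)
            = {fun _ : G => c} := by
          ext x
          simp only [Finset.mem_filter, mem_univ, true_and, Finset.mem_singleton]
          constructor
          · rintro ⟨hr, c', hc'⟩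
            have h1 := congrFun hr ⟨g₀, hg₀⟩
            rw [hc' g₀, hc ⟨g₀, hg₀⟩] at h1
            funext h
            rw [hc' h, h1]
          · rintro rfl
            exact ⟨funext fun i => (hc i).symm, c, fun _ => rfl⟩
        rw [this, Finset.card_singleton]
      · rw [Finset.card_eq_zero, Finset.eq_empty_iff_forall_notMem]
        intro x hx
        have hr := (Finset.mem_filter.1 (Finset.mem_filter.1 hx).1).2
        obtain ⟨c, hc⟩ := (Finset.mem_filter.1 hx).2
        exact hyc ⟨c, fun i => by rw [← congrFun hr i]; exact hc i.1⟩
    rw [e1, e2] at hsplit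
    rw [Nat.add_comm] at hsplit
    exact hsplit
  -- number of constant patterns
  have hconstS : (univ.filter (fun y : {g : G // g ∈ S} → Fin q => ∃ c, ∀ i, y i = c)).card
      = q := by
    have himg : univ.filter (fun y : {g : G // g ∈ S} → Fin q => ∃ c, ∀ i, y i = c)
        = univ.image (fun c : Fin q => (fun _ : {g : G // g ∈ S} => c)) := by
      ext y
      simp only [mem_filter, mem_univ, true_and, mem_image]
      constructor
      · rintro ⟨c, hc⟩
        exact ⟨c, funext fun i => (hc i).symm⟩
      · rintro ⟨c, rfl⟩
        exact ⟨c, fun i => rfl⟩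
    rw [himg, Finset.card_image_of_injective _ (fun c c' h => congrFun h ⟨g₀, hg₀⟩),
      card_univ, Fintype.card_fin]
  -- μ of constants avoids k
  have hμconst : ∀ y : {g : G // g ∈ S} → Fin q, (∃ c, ∀ i, y i = c) → ¬ μ y = k := by
    rintro y ⟨c, hc⟩ hμ
    apply hk c
    funext g
    rw [hτ]
    have hy : (fun s : {g : G // g ∈ S} => (fun _ : G => c) (s.1 * g)) = y :=
      funext fun i => (hc i).symm
    rw [hy, hμ]
  -- the y-sum
  have hysum : ∑ y : {g : G // g ∈ S} → Fin q, (if ¬ μ y = k then 1 else 0) *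
        ((univ.filter (fun x : G → Fin q => ¬∃ c, ∀ g, x g = c)).filter
          (fun x => (fun s : {g : G // g ∈ S} => x s.1) = y)).card
      = q ^ (Fintype.card G - S.card) *
          (univ.filter (fun y : {g : G // g ∈ S} → Fin q =>
            (¬∃ c, ∀ i, y i = c) ∧ ¬ μ y = k)).card
        + q * (q ^ (Fintype.card G - S.card) - 1) := by
    rw [← Finset.sum_filter_add_sum_filter_not (univ : Finset ({g : G // g ∈ S} → Fin q))
      (fun y => ∃ c, ∀ i, y i = c)]
    have hconstpart : ∑ y ∈ univ.filter (fun y : {g : G // g ∈ S} → Fin q => ∃ c, ∀ i, y i = c),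
        (if ¬ μ y = k then 1 else 0) *
          ((univ.filter (fun x : G → Fin q => ¬∃ c, ∀ g, x g = c)).filter
            (fun x => (fun s : {g : G // g ∈ S} => x s.1) = y)).card
        = q * (q ^ (Fintype.card G - S.card) - 1) := by
      have hterm : ∀ y ∈ univ.filter (fun y : {g : G // g ∈ S} → Fin q => ∃ c, ∀ i, y i = c),
          (if ¬ μ y = k then 1 else 0) *
            ((univ.filter (fun x : G → Fin q => ¬∃ c, ∀ g, x g = c)).filter
              (fun x => (fun s : {g : G // g ∈ S} => x s.1) = y)).card
          = q ^ (Fintype.card G - S.card) - 1 := by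
        intro y hy
        have hyc : ∃ c, ∀ i, y i = c := (Finset.mem_filter.1 hy).2
        rw [if_pos (hμconst y hyc), one_mul]
        have h := hfibcount y
        rw [if_pos hyc] at h
        exact sub_one_aux _ _ h
      rw [Finset.sum_congr rfl hterm, Finset.sum_const, smul_eq_mul, hconstS]
    have hncpart : ∑ y ∈ univ.filter (fun y : {g : G // g ∈ S} → Fin q => ¬∃ c, ∀ i, y i = c),
        (if ¬ μ y = k then 1 else 0) *
          ((univ.filter (fun x : G → Fin q => ¬∃ c, ∀ g, x g = c)).filter
            (fun x => (fun s : {g : G // g ∈ S} => x s.1) = y)).card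
        = q ^ (Fintype.card G - S.card) *
            (univ.filter (fun y : {g : G // g ∈ S} → Fin q =>
              (¬∃ c, ∀ i, y i = c) ∧ ¬ μ y = k)).card := by
      have hterm : ∀ y ∈ univ.filter (fun y : {g : G // g ∈ S} → Fin q => ¬∃ c, ∀ i, y i = c),
          (if ¬ μ y = k then 1 else 0) *
            ((univ.filter (fun x : G → Fin q => ¬∃ c, ∀ g, x g = c)).filter
              (fun x => (fun s : {g : G // g ∈ S} => x s.1) = y)).card
          = (if ¬ μ y = k then 1 else 0) * q ^ (Fintype.card G - S.card) := by
        intro y hy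
        have hyc : ¬∃ c, ∀ i, y i = c := (Finset.mem_filter.1 hy).2
        have := hfibcount y
        rw [if_neg hyc, add_zero] at this
        rw [this]
      rw [Finset.sum_congr rfl hterm, ← Finset.sum_mul, Finset.sum_boole, Nat.cast_id,
        Finset.filter_filter, mul_comm]
    rw [hconstpart, hncpart, Nat.add_comm]
  -- put everything together
  have hmain : ∑ x ∈ univ.filter (fun x : G → Fin q => ¬∃ c, ∀ g, x g = c),
        (univ.filter fun g : G => x g ≠ k).card
      = Fintype.card G * (q ^ (Fintype.card G - S.card) *
          (univ.filter (fun y : {g : G // g ∈ S} → Fin q =>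
            (¬∃ c, ∀ i, y i = c) ∧ ¬ μ y = k)).card
        + q * (q ^ (Fintype.card G - S.card) - 1)) := by
    rw [← hE2, hE3, hfib, hysum]
  have hM : Nat.card {y : {g : G // g ∈ S} → Fin q // (¬∃ c, ∀ i, y i = c) ∧ μ y ≠ k}
      = (univ.filter (fun y : {g : G // g ∈ S} → Fin q =>
          (¬∃ c, ∀ i, y i = c) ∧ ¬ μ y = k)).card := by
    rw [Nat.card_eq_fintype_card, Fintype.card_subtype]
  rw [hM]
  have hq0 : 0 < q := Nat.lt_of_lt_of_le Nat.zero_lt_two hq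
  have h1a : 1 ≤ q ^ (Fintype.card G - 1) := Nat.one_le_pow _ _ hq0
  have h1b : 1 ≤ q ^ (Fintype.card G - S.card) := Nat.one_le_pow _ _ hq0
  have hq1 : 1 ≤ q := hq0
  zify [h1a, h1b, hq1] at hE1 hmain ⊢
  linear_combination hmain - hE1
end

section
/- Let G be a finite group, A a finite set of size q ≥ 2, and H ≤ G a subgroup of index 2. Then B_{[H]} = {x ∈ A^G : G_x conjugate to H} consists of a single G-orbit if and only if q = 2. -/
open scoped Classical

/-- The block `B_{[H]}` of configurations whose stabiliser is conjugate to `H`. -/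
def blockOf {G A : Type*} [Group G] (H : Subgroup G) : Set (G → A) :=
  {x | ∃ g : G, ∀ h : G, confMul x h = x ↔ g * h * g⁻¹ ∈ H}

section Aux

variable {G A : Type*} [Group G]

/-- The configuration taking value `a` on `H` and `b` elsewhere. -/
noncomputable def conf (H : Subgroup G) (a b : A) : G → A := fun g => if g ∈ H then a else b

lemma conj_mem_iff {H : Subgroup G} (hH : H.index = 2) (g h : G) :
    g * h * g⁻¹ ∈ H ↔ h ∈ H := by
  rw [Subgroup.mul_mem_iff_of_index_two hH, Subgroup.mul_mem_iff_of_index_two hH,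
    H.inv_mem_iff]
  tauto

lemma confMul_conf {H : Subgroup G} (hH : H.index = 2) (a b : A) (g : G) :
    confMul (conf H a b) g = if g ∈ H then conf H a b else conf H b a := by
  funext h
  have key : h * g⁻¹ ∈ H ↔ (h ∈ H ↔ g ∈ H) := by
    rw [Subgroup.mul_mem_iff_of_index_two hH, H.inv_mem_iff]
  by_cases hg : g ∈ H <;> by_cases hh : h ∈ H <;>
    simp [confMul, conf, key, hg, hh]

lemma conf_ne {H : Subgroup G} {a b : A} (hab : a ≠ b) : conf H b a ≠ conf H a b := by
  intro h
  have := congrFun h 1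
  simp [conf, H.one_mem] at this
  exact hab this.symm

lemma conf_mem_block {H : Subgroup G} (hH : H.index = 2) {a b : A} (hab : a ≠ b) :
    conf H a b ∈ blockOf H := by
  refine ⟨1, fun h => ?_⟩
  rw [show (1 : G) * h * 1⁻¹ = h by group, confMul_conf hH]
  by_cases hh : h ∈ H
  · simp [hh]
  · simp [hh, conf_ne hab]

lemma mem_block_iff {H : Subgroup G} (hH : H.index = 2) (x : G → A) :
    x ∈ blockOf H ↔ ∃ a b : A, a ≠ b ∧ x = conf H a b := by
  constructor
  · rintro ⟨g, hg⟩
    have hstab : ∀ h : G, confMul x h = x ↔ h ∈ H := by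
      intro h; rw [hg h, conj_mem_iff hH]
    -- a g₀ outside H
    have hne : ∃ g₀ : G, g₀ ∉ H := by
      by_contra hc
      push_neg at hc
      have : H = ⊤ := (Subgroup.eq_top_iff' H).2 hc
      rw [this, Subgroup.index_top] at hH
      omega
    obtain ⟨g₀, hg₀⟩ := hne
    refine ⟨x 1, x g₀, ?_, ?_⟩
    · intro hab
      -- then x is constant on both cosets hence confMul x g₀ = x
      have hx : ∀ k : G, x k = x 1 := by
        intro k
        by_cases hk : k ∈ H
        · have := congrFun ((hstab k).2 hk) k
          simpa [confMul] using this.symm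
        · have hmem : (k⁻¹ * g₀ : G) ∈ H := by
            rw [Subgroup.mul_mem_iff_of_index_two hH, H.inv_mem_iff]
            tauto
          have := congrFun ((hstab _).2 hmem) g₀
          simp only [confMul] at this
          have h2 : g₀ * (k⁻¹ * g₀)⁻¹ = k := by group
          rw [h2] at this
          rw [this, ← hab]
      have : confMul x g₀ = x := by
        funext k; simp [confMul, hx]
      exact hg₀ ((hstab g₀).1 this)
    · funext k
      by_cases hk : k ∈ H
      · have := congrFun ((hstab k).2 hk) k
        simp only [confMul, mul_inv_cancel] at this
        simp [conf, hk, ← this]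
      · have hmem : (k⁻¹ * g₀ : G) ∈ H := by
          rw [Subgroup.mul_mem_iff_of_index_two hH, H.inv_mem_iff]
          tauto
        have := congrFun ((hstab _).2 hmem) g₀
        simp only [confMul] at this
        have h2 : g₀ * (k⁻¹ * g₀)⁻¹ = k := by group
        rw [h2] at this
        simp [conf, hk, this]
  · rintro ⟨a, b, hab, rfl⟩
    exact conf_mem_block hH hab

lemma orbit_conf {H : Subgroup G} (hH : H.index = 2) (g₀ : G) (hg₀ : g₀ ∉ H) (a b : A) :
    orbitOf (conf H a b) = {conf H a b, conf H b a} := by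
  ext y
  constructor
  · rintro ⟨g, rfl⟩
    rw [confMul_conf hH]
    by_cases hg : g ∈ H <;> simp [hg]
  · rintro (rfl | rfl)
    · exact ⟨1, by rw [confMul_conf hH]; simp [H.one_mem]⟩
    · exact ⟨g₀, by rw [confMul_conf hH]; simp [hg₀]⟩

end Aux

/-- For `H ≤ G` of index `2`, the block `B_{[H]} = {x ∈ A^G : G_x conjugate to H}`
consists of a single `G`-orbit if and only if `q = |A| = 2`. -/
theorem stmt18 {G A : Type*} [Group G] [Fintype G] [Fintype A]
    (hA : 2 ≤ Fintype.card A) (H : Subgroup G) (hH : H.index = 2) :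
    (∃ x : G → A, blockOf H = orbitOf x) ↔ Fintype.card A = 2 := by
  have hne : ∃ g₀ : G, g₀ ∉ H := by
    by_contra hc
    push_neg at hc
    have : H = ⊤ := (Subgroup.eq_top_iff' H).2 hc
    rw [this, Subgroup.index_top] at hH
    omega
  obtain ⟨g₀, hg₀⟩ := hne
  constructor
  · rintro ⟨x, hx⟩
    -- x itself lies in the block since x ∈ orbitOf x
    have hxorb : x ∈ orbitOf x := ⟨1, by funext h; simp [confMul]⟩
    have hxb : x ∈ blockOf H := hx ▸ hxorb
    obtain ⟨a, b, hab, rfl⟩ := (mem_block_iff hH x).1 hxb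
    rw [orbit_conf hH g₀ hg₀] at hx
    by_contra hcard
    have h3 : 3 ≤ Fintype.card A := by omega
    -- find c different from a and b
    obtain ⟨c, hca, hcb⟩ : ∃ c : A, c ≠ a ∧ c ≠ b := by
      by_contra hc
      push_neg at hc
      have : (Finset.univ : Finset A) ⊆ {a, b} := by
        intro z _
        by_cases hz : z = a
        · simp [hz]
        · simp [hc z hz]
      have := Finset.card_le_card this
      simp only [Finset.card_univ] at this
      have h2 : ({a, b} : Finset A).card ≤ 2 := Finset.card_insert_le _ _ |>.trans (by simp)
      omega
    have hmem : conf H a c ∈ blockOf H := conf_mem_block hH (fun h => hca h.symm)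
    rw [hx] at hmem
    rcases hmem with h | h
    · have := congrFun h g₀
      simp [conf, hg₀] at this
      exact hcb this
    · have := congrFun h 1
      simp [conf, H.one_mem] at this
      exact hab this
  · intro hcard
    obtain ⟨a, b, hab⟩ : ∃ a b : A, a ≠ b :=
      Fintype.exists_pair_of_one_lt_card (by omega)
    refine ⟨conf H a b, ?_⟩
    rw [orbit_conf hH g₀ hg₀]
    ext y
    rw [mem_block_iff hH]
    constructor
    · rintro ⟨a', b', hab', rfl⟩
      -- every element of A is a or b
      have hall : ∀ c : A, c = a ∨ c = b := by
        intro c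
        by_contra hc
        push_neg at hc
        have hsub : ({a, b, c} : Finset A) ⊆ Finset.univ := Finset.subset_univ _
        have h3 : ({a, b, c} : Finset A).card = 3 := by
          rw [Finset.card_insert_of_notMem (by simp [hab, hc.1.symm]),
            Finset.card_insert_of_notMem (by simp [hc.2.symm])]
          · simp
        have := Finset.card_le_card hsub
        rw [h3, Finset.card_univ, hcard] at this
        omega
      rcases hall a' with rfl | rfl
      · rcases hall b' with rfl | rfl
        · exact absurd rfl hab'
        · left; rfl
      · rcases hall b' with rfl | rfl
        · right; rfl
        · exact absurd rfl hab'
    · rintro (rfl | rfl)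
      · exact ⟨a, b, hab, rfl⟩
      · exact ⟨b, a, hab.symm, rfl⟩
end
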